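/- arXiv:1703.03599 — 9 statements merged into one kernel-verified Lean document; each statement's English description precedes it below -/
import Mathlib

section
/- Let $0<a<1$ and let $p(z)=z^4+(1-a)z^3-(4a-a^2-1)z^2+a(a-1)z+a^2$. Then all four zeros of $p$ lie in the open unit disk $|z|<1$. -/
open Complex

/-- If `‖b‖ = 1 - a` with `0 < a < 1`, `b` is non-real, then any root of
`z^2 + b z - a` lies in the open unit disk. -/
lemma quad_root_lt_one (a : ℝ) (h0 : 0 < a) (h1 : a < 1) (b z : ℂ)
    (hb : ‖b‖ = 1 - a) (hbi : b.im ≠ 0) (hz : z ^ 2 + b * z - (a : ℂ) = 0) :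
    ‖z‖ < 1 := by
  by_contra hge
  push_neg at hge
  have key : z * (z + b) = (a : ℂ) := by linear_combination hz
  have hnorm : ‖z‖ * ‖z + b‖ = a := by
    have := congrArg norm key
    rwa [norm_mul, Complex.norm_real, Real.norm_eq_abs, abs_of_pos h0] at this
  have hzb_le : ‖z + b‖ ≤ a := by nlinarith [norm_nonneg (z + b)]
  have hle1 : ‖z‖ ≤ 1 := by
    have h3 := norm_sub_le (z + b) b
    simp only [add_sub_cancel_right] at h3
    linarith
  have heq : ‖z‖ = 1 := le_antisymm hle1 hge
  have hzbeq : ‖z + b‖ = a := by rw [heq, one_mul] at hnorm; exact hnorm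
  have hc : z * (starRingEnd ℂ) z = 1 := by
    rw [Complex.mul_conj]
    norm_cast
    rw [← Complex.sq_norm, heq]; norm_num
  have hzb : z + b = (a : ℂ) * (starRingEnd ℂ) z := by
    linear_combination (starRingEnd ℂ) z * key - (z + b) * hc
  have hbim : b.im = -(a * z.im) - z.im := by
    have := congrArg Complex.im hzb
    simp [Complex.add_im, Complex.mul_im] at this
    linarith
  have hbre : b.re = a * z.re - z.re := by
    have := congrArg Complex.re hzb
    simp [Complex.add_re, Complex.mul_re] at this
    linarith
  have hznsq : z.re ^ 2 + z.im ^ 2 = 1 := by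
    have : ‖z‖ ^ 2 = 1 := by rw [heq]; norm_num
    rw [Complex.sq_norm] at this
    simpa [Complex.normSq_apply, sq] using this
  have hbnsq : b.re ^ 2 + b.im ^ 2 = (1 - a) ^ 2 := by
    have : ‖b‖ ^ 2 = (1 - a) ^ 2 := by rw [hb]
    rw [Complex.sq_norm] at this
    simpa [Complex.normSq_apply, sq] using this
  have hzim : z.im ≠ 0 := by
    intro h; apply hbi; rw [hbim, h]; ring
  have hzim2 : 0 < z.im ^ 2 := by positivity
  have e1 : b.re ^ 2 = (a - 1) ^ 2 * z.re ^ 2 := by rw [hbre]; ring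
  have e2 : b.im ^ 2 = (a + 1) ^ 2 * z.im ^ 2 := by rw [hbim]; ring
  have h6 : (a - 1) ^ 2 * (z.re ^ 2 + z.im ^ 2) = (a - 1) ^ 2 * 1 := by rw [hznsq]
  nlinarith [e1, e2, hbnsq, h6, mul_pos h0 hzim2]

/-- All four zeros of `z^4+(1-a)z^3-(4a-a^2-1)z^2+a(a-1)z+a^2` lie in the open unit disk. -/
theorem stmt_2 (a : ℝ) (h0 : 0 < a) (h1 : a < 1) :
    ∀ z : ℂ, z ^ 4 + (1 - (a : ℂ)) * z ^ 3 - (4 * (a : ℂ) - (a : ℂ) ^ 2 - 1) * z ^ 2 +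
      (a : ℂ) * ((a : ℂ) - 1) * z + (a : ℂ) ^ 2 = 0 → ‖z‖ < 1 := by
  intro z hz
  set s : ℝ := (1 - a) * Real.sqrt 3 / 2 with hs_def
  set b : ℂ := ((1 - a) / 2 : ℝ) + (s : ℂ) * I with hb_def
  set c : ℂ := ((1 - a) / 2 : ℝ) - (s : ℂ) * I with hc_def
  have hs3 : (Real.sqrt 3) ^ 2 = 3 := Real.sq_sqrt (by norm_num)
  have hs_pos : 0 < s := by
    have : 0 < Real.sqrt 3 := Real.sqrt_pos.mpr (by norm_num)
    have h1a : 0 < 1 - a := by linarith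
    positivity
  have hsum : b + c = 1 - (a : ℂ) := by
    rw [hb_def, hc_def]; push_cast; ring
  have hprod : b * c = (1 - (a : ℂ)) ^ 2 := by
    rw [hb_def, hc_def]; push_cast
    have h3c : ((Real.sqrt 3 : ℝ) : ℂ) ^ 2 = 3 := by exact_mod_cast hs3
    have hs2 : (s : ℂ) ^ 2 = 3 * (1 - (a : ℂ)) ^ 2 / 4 := by
      rw [hs_def]; push_cast
      linear_combination ((1 - (a : ℂ)) ^ 2 / 4) * h3c
    have hI : (I : ℂ) ^ 2 = -1 := Complex.I_sq
    linear_combination (-I ^ 2) * hs2 - (3 * (1 - (a : ℂ)) ^ 2 / 4) * hI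
  have hnormsq : ∀ w : ℂ, w = ((1 - a) / 2 : ℝ) + (s : ℂ) * I ∨
      w = ((1 - a) / 2 : ℝ) - (s : ℂ) * I → ‖w‖ = 1 - a := by
    intro w hw
    have hre_im : w.re ^ 2 + w.im ^ 2 = (1 - a) ^ 2 := by
      rcases hw with h | h <;> rw [h] <;>
        simp [Complex.add_re, Complex.add_im, Complex.sub_re, Complex.sub_im,
          Complex.mul_re, Complex.mul_im, Complex.I_re, Complex.I_im] <;>
        nlinarith [hs3]
    have h1a : (0:ℝ) ≤ 1 - a := by linarith
    have : ‖w‖ ^ 2 = (1 - a) ^ 2 := by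
      rw [Complex.sq_norm]
      simpa [Complex.normSq_apply, sq] using hre_im
    nlinarith [norm_nonneg w]
  have hfac : (z ^ 2 + b * z - (a : ℂ)) * (z ^ 2 + c * z - (a : ℂ)) = 0 := by
    linear_combination hz + (z ^ 3 - (a : ℂ) * z) * hsum + z ^ 2 * hprod
  rcases mul_eq_zero.mp hfac with h | h
  · exact quad_root_lt_one a h0 h1 b z (hnormsq b (Or.inl hb_def)) (by
      rw [hb_def]; simp [Complex.add_im, Complex.mul_im, Complex.I_re, Complex.I_im]
      exact ne_of_gt hs_pos) h
  · exact quad_root_lt_one a h0 h1 c z (hnormsq c (Or.inr hc_def)) (by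
      rw [hc_def]; simp [Complex.sub_im, Complex.mul_im, Complex.I_re, Complex.I_im]
      exact ne_of_gt hs_pos) h
end

section
/- Let $0<a<1$ and let $p(z)=z^4+(1-4a+a^2)z^3+(1-4a+4a^2-a^3)z^2+(-a+4a^2-a^3)z-a^3$. Then all four zeros of $p$ lie in the open unit disk $|z|<1$. -/
/-!
With `s = a² - 3a + 1` the quartic factors as `(z - a)(z³ + s z² + s z + a²)`, and the cubic
`q(z) = z³ + s z² + s z + c` has all its zeros in the unit disk as soon as `c < 1`,
`q(1) = 1 + 2s + c > 0` and `s < 1 + c` (Jury's conditions for this family).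
A real zero `x` with `|x| ≥ 1` is excluded by expanding `q` at `±1`. For a non-real zero
`x + iy`, the imaginary part gives `y² = 3x² + 2sx + s`; eliminating `y²` from the real part
leaves a cubic `g(x) = 0`, while `|z|² - 1 = (2x + 1)(2x - 1 + s)`. Dividing `g` by either
factor leaves a positive definite quadratic and a remainder of the wrong sign.
-/

theorem abs_lt_one_of_cubic_eq_zero {s c x : ℝ} (hc : c < 1) (hq1 : 0 < 1 + 2 * s + c)
    (hsc : s < 1 + c) (hx : x ^ 3 + s * x ^ 2 + s * x + c = 0) : |x| < 1 := by
  rw [abs_lt]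
  constructor
  · by_contra! hle
    have hexp : (c - 1) + (3 - s) * (x + 1) + (x + 1) ^ 2 * (x + s - 2) = 0 := by
      linear_combination hx
    nlinarith [mul_nonpos_of_nonneg_of_nonpos (sq_nonneg (x + 1)) (by linarith : x + s - 2 ≤ 0)]
  · by_contra! hge
    have hexp : (1 + 2 * s + c) + 3 * (1 + s) * (x - 1) + (x - 1) ^ 2 * (x + s + 2) = 0 := by
      linear_combination hx
    nlinarith [mul_nonneg (sq_nonneg (x - 1)) (by linarith : 0 ≤ x + s + 2)]

theorem mul_neg_of_cubic_resolvent_eq_zero {s c x : ℝ} (hc : c < 1) (hsc : s < 1 + c)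
    (hx : 8 * x ^ 3 + 8 * s * x ^ 2 + 2 * s * (1 + s) * x + s ^ 2 - c = 0) :
    (2 * x + 1) * (2 * x - 1 + s) < 0 := by
  by_contra! hge
  rcases le_or_gt (2 * x + 1) 0 with hneg | hpos
  · have hdiv : 8 * (s - 1 - c) + (x + 1 / 2) * ((8 * x + 4 * s - 2) ^ 2 + 12) = 0 := by
      linear_combination 8 * hx
    nlinarith [mul_nonpos_of_nonpos_of_nonneg (by linarith : x + 1 / 2 ≤ 0)
      (by positivity : (0 : ℝ) ≤ (8 * x + 4 * s - 2) ^ 2 + 12)]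
  · have hx' : 0 ≤ 2 * x - 1 + s := nonneg_of_mul_nonneg_right hge hpos
    have hdiv : 8 * (1 - c)
        + (x - (1 - s) / 2) * ((8 * x + 2 * s + 2) ^ 2 + 4 * ((s + 1) * (3 - s))) = 0 := by
      linear_combination 8 * hx
    nlinarith [mul_nonneg (by linarith : 0 ≤ x - (1 - s) / 2)
      (by nlinarith : (0 : ℝ) ≤ (8 * x + 2 * s + 2) ^ 2 + 4 * ((s + 1) * (3 - s)))]

theorem norm_lt_one_of_cubic_eq_zero {s c : ℝ} (hc : c < 1) (hq1 : 0 < 1 + 2 * s + c)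
    (hsc : s < 1 + c) {z : ℂ} (hz : z ^ 3 + s * z ^ 2 + s * z + c = 0) : ‖z‖ < 1 := by
  rw [← pow_lt_one_iff_of_nonneg (norm_nonneg z) two_ne_zero, Complex.sq_norm,
    Complex.normSq_apply]
  have hre := congrArg Complex.re hz
  have him := congrArg Complex.im hz
  simp only [pow_succ, pow_zero, one_mul, Complex.add_re, Complex.add_im, Complex.mul_re,
    Complex.mul_im, Complex.ofReal_re, Complex.ofReal_im, Complex.zero_re, Complex.zero_im] at hre him
  set x := z.re
  set y := z.im
  have hre' : x ^ 3 - 3 * x * y ^ 2 + s * (x ^ 2 - y ^ 2) + s * x + c = 0 := by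
    linear_combination hre
  have him' : y * (3 * x ^ 2 - y ^ 2 + 2 * s * x + s) = 0 := by linear_combination him
  rcases mul_eq_zero.mp him' with hy | hy
  · have hx : x ^ 3 + s * x ^ 2 + s * x + c = 0 := by
      rw [hy] at hre'
      linear_combination hre'
    have := (sq_lt_one_iff_abs_lt_one x).mpr (abs_lt_one_of_cubic_eq_zero hc hq1 hsc hx)
    rw [hy]
    linarith
  · have hres : 8 * x ^ 3 + 8 * s * x ^ 2 + 2 * s * (1 + s) * x + s ^ 2 - c = 0 := by
      linear_combination (-1) * hre' + (3 * x + s) * hy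
    have := mul_neg_of_cubic_resolvent_eq_zero hc hsc hres
    linarith

/-- All four zeros of the quartic arising from `ω(z) = -(a-z)^2/(1-az)^2` lie in the unit disk. -/
theorem stmt_3 (a : ℝ) (h0 : 0 < a) (h1 : a < 1) :
    ∀ z : ℂ, z ^ 4 + (1 - 4 * (a : ℂ) + (a : ℂ) ^ 2) * z ^ 3 +
      (1 - 4 * (a : ℂ) + 4 * (a : ℂ) ^ 2 - (a : ℂ) ^ 3) * z ^ 2 +
      (-(a : ℂ) + 4 * (a : ℂ) ^ 2 - (a : ℂ) ^ 3) * z - (a : ℂ) ^ 3 = 0 → ‖z‖ < 1 := by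
  intro z hp
  have hfac : (z - a) * (z ^ 3 + ((a ^ 2 - 3 * a + 1 : ℝ) : ℂ) * z ^ 2
      + ((a ^ 2 - 3 * a + 1 : ℝ) : ℂ) * z + ((a ^ 2 : ℝ) : ℂ)) = 0 := by
    push_cast
    linear_combination hp
  rcases mul_eq_zero.mp hfac with hlin | hcub
  · rw [sub_eq_zero.mp hlin, Complex.norm_real, Real.norm_of_nonneg h0.le]
    exact h1
  · refine norm_lt_one_of_cubic_eq_zero ?_ ?_ ?_ hcub <;> nlinarith
end

section
/- Cohn's rule: Let $t(z)=a_0+a_1z+\dots+a_nz^n$ be a polynomial of degree $n$ with $|a_0|<|a_n|$, and let $t^*(z)=z^n\overline{t(1/\bar z)}=\bar a_n+\bar a_{n-1}z+\dots+\bar a_0 z^n$. Then $t_1(z)=\frac{\bar a_n t(z)-a_0 t^*(z)}{z}$ is a polynomial of degree $n-1$, and the number of zeros of $t_1$ inside the open unit disk (counted with multiplicity) is exactly one less than the number of zeros of $t$ inside the open unit disk, while the number of zeros on the unit circle is the same for $t_1$ and $t$. -/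
open Polynomial Metric Real Complex

lemma evalReverse (p : Polynomial ℂ) (z : ℂ) (hz : z ≠ 0) :
    eval z p.reverse = z ^ p.natDegree * eval z⁻¹ p := by
  letI : Invertible (z⁻¹) := invertibleOfNonzero (inv_ne_zero hz)
  have h := Polynomial.eval₂_reverse_mul_pow (RingHom.id ℂ) (z⁻¹) p
  have h2 : (⅟(z⁻¹) : ℂ) = z := by rw [invOf_eq_inv _, inv_inv]
  rw [h2] at h
  rw [Polynomial.eval₂_eq_eval_map, Polynomial.eval₂_eq_eval_map, Polynomial.map_id] at h
  simp only [Polynomial.map_id] at h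
  rw [← h, ← mul_assoc, mul_comm (z ^ _), mul_assoc, ← mul_pow, mul_inv_cancel₀ hz, one_pow,
    mul_one]

lemma evalMapConj (p : Polynomial ℂ) (z : ℂ) :
    eval z (p.map (starRingEnd ℂ)) = (starRingEnd ℂ) (eval ((starRingEnd ℂ) z) p) := by
  rw [Polynomial.eval_map]
  have := Polynomial.hom_eval₂ p (RingHom.id ℂ) (starRingEnd ℂ) ((starRingEnd ℂ) z)
  rw [Polynomial.eval₂_eq_eval_map, Polynomial.map_id] at this
  rw [this]
  simp [Complex.conj_conj]

lemma normRevConj (g : Polynomial ℂ) (z : ℂ) (hz : ‖z‖ = 1) :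
    ‖eval z (g.map (starRingEnd ℂ)).reverse‖ = ‖eval z g‖ := by
  have hz0 : z ≠ 0 := by intro h; rw [h] at hz; simp at hz
  have hinv : z⁻¹ = (starRingEnd ℂ) z := by
    have : z * (starRingEnd ℂ) z = 1 := by
      rw [Complex.mul_conj]
      norm_cast
      rw [← Complex.sq_norm]
      rw [hz]; norm_num
    field_simp [eq_comm]
    linear_combination (-1 : ℂ) * this
  rw [evalReverse _ _ hz0, norm_mul, norm_pow, hz, one_pow, one_mul, hinv,
    evalMapConj, Complex.conj_conj]
  exact RCLike.norm_conj _
lemma logDerivProd (s : Multiset ℂ) (z : ℂ)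
    (h : eval z (s.map (fun r => X - C r)).prod ≠ 0) :
    eval z (derivative (s.map (fun r => X - C r)).prod) =
      eval z (s.map (fun r => X - C r)).prod * (s.map (fun r => (z - r)⁻¹)).sum := by
  induction s using Multiset.induction with
  | empty => simp
  | cons r s ih =>
    simp only [Multiset.map_cons, Multiset.prod_cons, Multiset.sum_cons] at h ⊢
    rw [derivative_mul]
    simp only [derivative_sub, derivative_X, derivative_C, sub_zero, one_mul,
      eval_add, eval_mul, eval_sub, eval_X, eval_C] at h ⊢
    have hzr : z - r ≠ 0 := fun hc => h (by rw [hc, zero_mul])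
    have hP : eval z (Multiset.map (fun r => X - C r) s).prod ≠ 0 :=
      fun hc => h (by rw [hc, mul_zero])
    rw [ih hP]
    field_simp

lemma logDerivPoly (p : Polynomial ℂ) (z : ℂ) (h : eval z p ≠ 0) :
    eval z (derivative p) = eval z p * (p.roots.map (fun r => (z - r)⁻¹)).sum := by
  have hp : p ≠ 0 := fun hc => h (by rw [hc]; simp)
  have hsp := Polynomial.Splits.eq_prod_roots (IsAlgClosed.splits p)
  have h2 : eval z (p.roots.map (fun r => X - C r)).prod ≠ 0 := by
    intro hc
    rw [hsp] at h
    simp [eval_mul, hc] at h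
  obtain ⟨c, R, hc⟩ : ∃ c R, p = C c * (Multiset.map (fun r => X - C r) R).prod ∧
      R = p.roots := ⟨p.leadingCoeff, p.roots, hsp, rfl⟩
  obtain ⟨hpe, hR⟩ := hc
  rw [← hR] at h2 ⊢
  rw [hpe, derivative_C_mul, eval_mul, eval_C, eval_mul, eval_C, logDerivProd _ _ h2]
  ring
lemma integralInvIn (r : ℂ) (hr : ‖r‖ < 1) : (∮ z in C(0,1), (z - r)⁻¹) = 2 * π * I :=
  circleIntegral.integral_sub_inv_of_mem_ball (by
    simpa [Metric.mem_ball, Complex.dist_eq] using hr)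

lemma integralInvOut (r : ℂ) (hr : 1 < ‖r‖) : (∮ z in C(0,1), (z - r)⁻¹) = 0 := by
  apply Complex.circleIntegral_eq_zero_of_differentiable_on_off_countable
    zero_le_one Set.countable_empty
  · apply ContinuousOn.inv₀ (by fun_prop)
    intro z hz
    intro hc
    rw [sub_eq_zero] at hc
    rw [Metric.mem_closedBall, Complex.dist_eq, sub_zero] at hz
    rw [hc] at hz
    exact absurd (lt_of_lt_of_le hr hz) (by norm_num)
  · intro z hz
    apply DifferentiableAt.inv (by fun_prop)
    intro hc
    rw [sub_eq_zero] at hc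
    have := hz.1
    rw [Metric.mem_ball, Complex.dist_eq, sub_zero, hc] at this
    exact absurd (hr.trans this) (by norm_num)

lemma circleIntegralAdd {f g : ℂ → ℂ} (hf : CircleIntegrable f 0 1)
    (hg : CircleIntegrable g 0 1) :
    (∮ z in C(0,1), (f z + g z)) = (∮ z in C(0,1), f z) + ∮ z in C(0,1), g z := by
  simp only [circleIntegral, smul_add]
  exact intervalIntegral.integral_add hf.out hg.out

lemma circleIntegrableInv (r : ℂ) (hr : ‖r‖ ≠ 1) :
    CircleIntegrable (fun z => (z - r)⁻¹) 0 1 := by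
  apply ContinuousOn.circleIntegrable zero_le_one
  apply ContinuousOn.inv₀ (by fun_prop)
  intro z hz hc
  rw [sub_eq_zero] at hc
  rw [mem_sphere_iff_norm, sub_zero, hc] at hz
  exact hr hz

lemma circleIntegrableSum (s : Multiset ℂ) (hs : ∀ r ∈ s, ‖r‖ ≠ 1) :
    CircleIntegrable (fun z => (s.map (fun r => (z - r)⁻¹)).sum) 0 1 := by
  induction s using Multiset.induction with
  | empty => simpa using circleIntegrable_const (0 : ℂ) 0 1
  | cons r s ih =>
    simp only [Multiset.map_cons, Multiset.sum_cons]
    exact (circleIntegrableInv r (hs r (Multiset.mem_cons_self r s))).add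
      (ih fun a ha => hs a (Multiset.mem_cons_of_mem ha))

lemma integralMultisetSum (s : Multiset ℂ) (hs : ∀ r ∈ s, ‖r‖ ≠ 1) :
    (∮ z in C(0,1), (s.map (fun r => (z - r)⁻¹)).sum) =
      (2 * π * I) * (Multiset.card (s.filter (fun z => ‖z‖ < 1)) : ℂ) := by
  induction s using Multiset.induction with
  | empty => simp [circleIntegral]
  | cons r s ih =>
    have h1 := circleIntegrableInv r (hs r (Multiset.mem_cons_self r s))
    have hs' : ∀ a ∈ s, ‖a‖ ≠ 1 := fun a ha => hs a (Multiset.mem_cons_of_mem ha)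
    have h2 := circleIntegrableSum s hs'
    have hsplit : (∮ z in C(0,1), ((r ::ₘ s).map (fun r => (z - r)⁻¹)).sum) =
        (∮ z in C(0,1), (z - r)⁻¹) + ∮ z in C(0,1), (s.map (fun r => (z - r)⁻¹)).sum := by
      rw [← circleIntegralAdd h1 h2]
      apply circleIntegral.integral_congr zero_le_one
      intro z _
      simp [Multiset.map_cons, Multiset.sum_cons]
    rw [hsplit, ih hs']
    by_cases hr : ‖r‖ < 1
    · rw [integralInvIn r hr, Multiset.filter_cons]
      simp only [if_pos hr, Multiset.card_add, Multiset.card_singleton]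
      push_cast
      ring
    · have : 1 < ‖r‖ := lt_of_le_of_ne (not_lt.mp hr) (Ne.symm (hs r (Multiset.mem_cons_self r s)))
      rw [integralInvOut r this, Multiset.filter_cons]
      simp only [if_neg hr]; rw [zero_add, zero_add]

lemma countEqIntegral (p : Polynomial ℂ) (hsp : ∀ z : ℂ, ‖z‖ = 1 → eval z p ≠ 0) :
    (∮ z in C(0,1), eval z (derivative p) / eval z p) =
      (2 * π * I) * (Multiset.card (p.roots.filter (fun z => ‖z‖ < 1)) : ℂ) := by
  have hroots : ∀ r ∈ p.roots, ‖r‖ ≠ 1 := by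
    intro r hr hc
    exact hsp r hc ((Polynomial.mem_roots (Polynomial.ne_zero_of_mem_roots hr)).mp hr)
  rw [← integralMultisetSum p.roots hroots]
  apply circleIntegral.integral_congr zero_le_one
  intro z hz
  rw [mem_sphere_iff_norm, sub_zero] at hz
  have h := hsp z hz
  show eval z (derivative p) / eval z p = _
  rw [logDerivPoly p z h, mul_comm, mul_div_assoc, div_self h, mul_one]
lemma rouche (P Q : Polynomial ℂ)
    (hPQ : ∀ z : ℂ, ‖z‖ = 1 → ‖eval z Q‖ < ‖eval z P‖) :
    Multiset.card ((P - Q).roots.filter (fun z => ‖z‖ < 1)) =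
      Multiset.card (P.roots.filter (fun z => ‖z‖ < 1)) := by
  classical
  set cl : ℝ → ℝ := fun ε => max 0 (min ε 1) with hcl
  have hcl0 : ∀ ε, 0 ≤ cl ε := fun ε => le_max_left _ _
  have hcl1 : ∀ ε, cl ε ≤ 1 := fun ε => max_le (by norm_num) (min_le_right _ _)
  have hclcont : Continuous cl := continuous_const.max (continuous_id.min continuous_const)
  set pe : ℝ → Polynomial ℂ := fun ε => P - C ((cl ε : ℝ) : ℂ) * Q with hpe
  have key : ∀ (ε : ℝ) (z : ℂ), ‖z‖ = 1 → eval z (pe ε) ≠ 0 := by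
    intro ε z hz
    have h1 : ‖eval z P - ((cl ε : ℝ) : ℂ) * eval z Q‖ > 0 := by
      have h2 : ‖((cl ε : ℝ) : ℂ) * eval z Q‖ ≤ ‖eval z Q‖ := by
        rw [norm_mul]
        have : ‖((cl ε : ℝ) : ℂ)‖ ≤ 1 := by
          rw [Complex.norm_real, Real.norm_eq_abs, _root_.abs_of_nonneg (hcl0 ε)]
          exact hcl1 ε
        nlinarith [norm_nonneg (eval z Q)]
      have := hPQ z hz
      have h3 := norm_sub_norm_le (eval z P) (((cl ε : ℝ) : ℂ) * eval z Q)
      linarith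
    intro hc
    simp only [hpe, eval_sub, eval_mul, eval_C] at hc
    rw [hc] at h1
    simp at h1
  have hpe0 : ∀ ε : ℝ, pe ε ≠ 0 := by
    intro ε hc
    have := key ε 1 (by simp)
    rw [hc] at this
    simp at this
  -- the integral as a function of ε
  set G : ℝ → ℝ → ℂ := fun ε θ =>
    (circleMap 0 1 θ * I) *
      ((eval (circleMap 0 1 θ) (derivative P) -
          ((cl ε : ℝ) : ℂ) * eval (circleMap 0 1 θ) (derivative Q)) /
        (eval (circleMap 0 1 θ) P - ((cl ε : ℝ) : ℂ) * eval (circleMap 0 1 θ) Q)) with hG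
  have hGF : ∀ ε : ℝ,
      (∮ z in C(0,1), eval z (derivative (pe ε)) / eval z (pe ε)) =
        ∫ θ in (0:ℝ)..(2*π), G ε θ := by
    intro ε
    simp only [circleIntegral, deriv_circleMap, smul_eq_mul, hG]
    congr 1
    funext θ
    simp only [hpe, derivative_sub, derivative_C_mul, eval_sub, eval_mul, eval_C]
  have hGcont : Continuous (Function.uncurry G) := by
    have hden : ∀ p : ℝ × ℝ,
        eval (circleMap 0 1 p.2) P - ((cl p.1 : ℝ) : ℂ) * eval (circleMap 0 1 p.2) Q ≠ 0 := by
      intro p hc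
      have := key p.1 (circleMap 0 1 p.2) (by simp)
      apply this
      simp only [hpe, eval_sub, eval_mul, eval_C]
      exact hc
    apply Continuous.mul
    · fun_prop
    · apply Continuous.div
      · fun_prop
      · fun_prop
      · exact hden
  have hFcont : Continuous (fun ε => ∫ θ in (0:ℝ)..(2*π), G ε θ) :=
    intervalIntegral.continuous_parametric_intervalIntegral_of_continuous' hGcont 0 (2*π)
  set N : ℝ → ℕ := fun ε => Multiset.card ((pe ε).roots.filter (fun z => ‖z‖ < 1)) with hN
  have hFN : ∀ ε : ℝ, (∫ θ in (0:ℝ)..(2*π), G ε θ) = (2 * π * I) * (N ε : ℂ) := by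
    intro ε
    rw [← hGF ε]
    exact countEqIntegral (pe ε) (key ε)
  set u : ℝ → ℝ := fun ε => ((∫ θ in (0:ℝ)..(2*π), G ε θ) / (2 * π * I)).re with hu
  have hpiI : (2 * Real.pi * I : ℂ) ≠ 0 := by
    simp [Real.pi_ne_zero, Complex.ext_iff, I_ne_zero]
  have huN : ∀ ε : ℝ, u ε = (N ε : ℝ) := by
    intro ε
    simp only [hu, hFN ε]
    rw [mul_comm, mul_div_assoc, div_self hpiI, mul_one]
    simp
  have hucont : Continuous u := (Complex.continuous_re.comp (hFcont.div_const _))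
  -- N is constant on [0,1] by IVT
  have hmain : N 0 = N 1 := by
    by_contra hne
    rcases lt_or_gt_of_ne hne with hlt | hlt
    · have h05 : ((N 0 : ℝ) + 1/2) ∈ Set.Icc (u 0) (u 1) := by
        rw [huN 0, huN 1]
        constructor
        · linarith
        · have : (N 0 : ℝ) + 1 ≤ N 1 := by exact_mod_cast hlt
          linarith
      obtain ⟨ε, -, hε⟩ := intermediate_value_Icc (zero_le_one) hucont.continuousOn h05
      rw [huN ε] at hε
      have h2 : ((2 * N ε : ℕ) : ℝ) = ((2 * N 0 + 1 : ℕ) : ℝ) := by push_cast; linarith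
      have := Nat.cast_injective h2
      omega
    · have h05 : ((N 1 : ℝ) + 1/2) ∈ Set.Icc (u 1) (u 0) := by
        rw [huN 0, huN 1]
        constructor
        · linarith
        · have : (N 1 : ℝ) + 1 ≤ N 0 := by exact_mod_cast hlt
          linarith
      obtain ⟨ε, -, hε⟩ := intermediate_value_Icc' (zero_le_one) hucont.continuousOn h05
      rw [huN ε] at hε
      have h2 : ((2 * N ε : ℕ) : ℝ) = ((2 * N 1 + 1 : ℕ) : ℝ) := by push_cast; linarith
      have := Nat.cast_injective h2
      omega
  have he0 : pe 0 = P := by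
    simp only [hpe, hcl]
    norm_num
  have he1 : pe 1 = P - Q := by
    simp only [hpe, hcl]
    norm_num
  have := hmain
  rw [hN] at this
  simp only [he0, he1] at this
  exact this.symm
lemma reverseLinear (c : ℂ) : (X - C c).reverse = 1 - C c * X := by
  rw [Polynomial.reverse, natDegree_X_sub_C, reflect_sub, reflect_one_X, reflect_C]
  rw [pow_one]

lemma revConjProd (c : Multiset ℂ) (hc : ∀ w ∈ c, ‖w‖ = 1) :
    ∃ u : ℂ, ‖u‖ = 1 ∧
      ((c.map (fun w => X - C w)).prod.map (starRingEnd ℂ)).reverse =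
        C u * (c.map (fun w => X - C w)).prod := by
  induction c using Multiset.induction with
  | empty =>
    refine ⟨1, by norm_num, ?_⟩
    simp only [Multiset.map_zero, Multiset.prod_zero, Polynomial.map_one, C_1, one_mul]
    rw [← C_1, reverse_C]
  | cons w c ih =>
    obtain ⟨u, hu, hrec⟩ := ih (fun x hx => hc x (Multiset.mem_cons_of_mem hx))
    have hw1 : ‖w‖ = 1 := hc w (Multiset.mem_cons_self w c)
    have hw0 : w ≠ 0 := by intro h; rw [h] at hw1; simp at hw1
    have hwconj : (starRingEnd ℂ) w * w = 1 := by
      rw [mul_comm, Complex.mul_conj]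
      norm_cast
      rw [← Complex.sq_norm]
      rw [hw1]; norm_num
    refine ⟨-((starRingEnd ℂ) w) * u, by simp [norm_mul, hu, RCLike.norm_conj, hw1], ?_⟩
    simp only [Multiset.map_cons, Multiset.prod_cons, Polynomial.map_mul,
      Polynomial.map_sub, Polynomial.map_X, Polynomial.map_C]
    have hne1 : (X - C ((starRingEnd ℂ) w)) ≠ (0 : Polynomial ℂ) := X_sub_C_ne_zero _
    rw [Polynomial.reverse_mul_of_domain, hrec, reverseLinear]
    have hCC : C ((starRingEnd ℂ) w) * C w = 1 := by rw [← C_mul, hwconj, C_1]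
    have hCn : C (-((starRingEnd ℂ) w) * u) = -(C ((starRingEnd ℂ) w)) * C u := by
      rw [C_mul, map_neg]
    rw [hCn]
    linear_combination (-(C u * (c.map (fun w => X - C w)).prod)) * hCC
/-- Cohn's rule: if `t` has degree `n` with `|a₀| < |aₙ|`, then
`t₁(z) = (conj aₙ · t(z) - a₀ · t*(z))/z` has degree `n-1`, one fewer zero in the open
unit disk (with multiplicity), and the same number of zeros on the unit circle. -/
theorem stmt_5 (n : ℕ) (hn : 1 ≤ n) (t : Polynomial ℂ) (ht : t.natDegree = n)
    (hcoef : ‖t.coeff 0‖ < ‖t.coeff n‖) :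
    (((C ((starRingEnd ℂ) (t.coeff n))) * t -
        C (t.coeff 0) * (t.map (starRingEnd ℂ)).reverse).divX).degree = ((n - 1 : ℕ) : ℕ) ∧
    Multiset.card (((((C ((starRingEnd ℂ) (t.coeff n))) * t -
        C (t.coeff 0) * (t.map (starRingEnd ℂ)).reverse).divX).roots).filter
          (fun z => ‖z‖ < 1)) + 1 =
      Multiset.card ((t.roots).filter (fun z => ‖z‖ < 1)) ∧
    Multiset.card (((((C ((starRingEnd ℂ) (t.coeff n))) * t -
        C (t.coeff 0) * (t.map (starRingEnd ℂ)).reverse).divX).roots).filter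
          (fun z => ‖z‖ = 1)) =
      Multiset.card ((t.roots).filter (fun z => ‖z‖ = 1)) := by
  set a : ℂ := t.coeff 0 with ha
  set b : ℂ := t.coeff n with hb
  set s : Polynomial ℂ := C ((starRingEnd ℂ) b) * t - C a * (t.map (starRingEnd ℂ)).reverse
    with hsdef
  have hb0 : b ≠ 0 := by
    intro h
    rw [h, norm_zero] at hcoef
    exact (norm_nonneg a).not_gt hcoef
  have ht0 : t ≠ 0 := by
    intro h
    apply hb0
    rw [hb, h, Polynomial.coeff_zero]
  have htc : (t.map (starRingEnd ℂ)).natDegree = n := by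
    rw [Polynomial.natDegree_map, ht]
  -- coefficient 0 of s vanishes
  have hrevc0 : ((t.map (starRingEnd ℂ)).reverse).coeff 0 = (starRingEnd ℂ) b := by
    rw [coeff_zero_reverse, Polynomial.leadingCoeff, htc, Polynomial.coeff_map, hb]
  have hs0 : s.coeff 0 = 0 := by
    rw [hsdef, Polynomial.coeff_sub, Polynomial.coeff_C_mul, Polynomial.coeff_C_mul, hrevc0,
      ← ha]
    ring
  -- coefficient n of s
  have hrevcn : ((t.map (starRingEnd ℂ)).reverse).coeff n = (starRingEnd ℂ) a := by
    rw [Polynomial.coeff_reverse, htc, Polynomial.revAt_le (le_refl n), Nat.sub_self,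
      Polynomial.coeff_map, ha]
  have hsn : s.coeff n = ((Complex.normSq b : ℝ) : ℂ) - ((Complex.normSq a : ℝ) : ℂ) := by
    rw [hsdef, Polynomial.coeff_sub, Polynomial.coeff_C_mul, Polynomial.coeff_C_mul, hrevcn,
      ← hb]
    rw [mul_comm ((starRingEnd ℂ) b) b, Complex.mul_conj, Complex.mul_conj]
  have hsnne : s.coeff n ≠ 0 := by
    rw [hsn]
    intro h
    have h2 : Complex.normSq b = Complex.normSq a := by
      have := congrArg Complex.re h
      simp at this
      linarith
    have ha2 : Complex.normSq a = ‖a‖ ^ 2 := by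
      rw [Complex.normSq_eq_norm_sq]
    have hb2 : Complex.normSq b = ‖b‖ ^ 2 := by
      rw [Complex.normSq_eq_norm_sq]
    rw [ha2, hb2] at h2
    nlinarith [norm_nonneg a, norm_nonneg b]
  have hsne : s ≠ 0 := fun h => hsnne (by rw [h, Polynomial.coeff_zero])
  have hsnat : s.natDegree = n := by
    have h1 : s.natDegree ≤ n := by
      rw [hsdef]
      refine le_trans (Polynomial.natDegree_sub_le _ _) (max_le ?_ ?_)
      · exact le_trans (Polynomial.natDegree_C_mul_le _ _) (le_of_eq ht)
      · exact le_trans (Polynomial.natDegree_C_mul_le _ _)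
          (le_trans (Polynomial.reverse_natDegree_le _) (le_of_eq htc))
    exact le_antisymm h1 (Polynomial.le_natDegree_of_ne_zero hsnne)
  have hsX : s.divX * X = s := by
    conv_rhs => rw [← Polynomial.divX_mul_X_add s]
    rw [hs0, C_0, add_zero]
  have ht1ne : s.divX ≠ 0 := by
    intro h
    apply hsne
    rw [← hsX, h, zero_mul]
  have ht1nat : s.divX.natDegree = n - 1 := by
    rw [Polynomial.natDegree_divX_eq_natDegree_tsub_one, hsnat]
  have hdegree : s.divX.degree = ((n - 1 : ℕ) : WithBot ℕ) := by
    rw [Polynomial.degree_eq_natDegree ht1ne, ht1nat]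
  -- roots of s
  have hsroots1 : s.roots = s.divX.roots + {0} := by
    have h := Polynomial.roots_mul (p := s.divX) (q := X) (by rw [hsX]; exact hsne)
    rw [hsX, Polynomial.roots_X] at h
    exact h
  -- circle roots of t
  set cr : Multiset ℂ := t.roots.filter (fun z => ‖z‖ = 1) with hcr
  have hcrall : ∀ w ∈ cr, ‖w‖ = 1 := fun w hw => (Multiset.mem_filter.mp hw).2
  set m : Polynomial ℂ := (cr.map (fun w => X - C w)).prod with hm
  have hdvd : m ∣ t :=
    dvd_trans (Multiset.prod_dvd_prod_of_le (Multiset.map_le_map (Multiset.filter_le _ _)))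
      t.prod_multiset_X_sub_C_dvd
  obtain ⟨g, hg⟩ := hdvd
  have hgne : g ≠ 0 := by intro h; rw [h, mul_zero] at hg; exact ht0 hg
  have hmne : m ≠ 0 := by intro h; rw [h, zero_mul] at hg; exact ht0 hg
  have hrootsm : m.roots = cr := Polynomial.roots_multiset_prod_X_sub_C cr
  have hrootst : t.roots = cr + g.roots := by
    rw [hg, Polynomial.roots_mul (by rw [← hg]; exact ht0), hrootsm]
  have hgcirc : ∀ z : ℂ, ‖z‖ = 1 → eval z g ≠ 0 := by
    intro z hz hzero
    have hmem : z ∈ g.roots := (Polynomial.mem_roots hgne).mpr hzero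
    have h1 : t.roots.count z = cr.count z + g.roots.count z := by
      rw [hrootst, Multiset.count_add]
    have h2 : cr.count z = t.roots.count z := by
      rw [hcr]; exact Multiset.count_filter_of_pos hz
    have h3 : 0 < g.roots.count z := Multiset.count_pos.mpr hmem
    omega
  obtain ⟨u, hu1, hrevm⟩ := revConjProd cr hcrall
  rw [← hm] at hrevm
  set PP : Polynomial ℂ := C ((starRingEnd ℂ) b) * g with hPP
  set QQ : Polynomial ℂ := C (a * u) * (g.map (starRingEnd ℂ)).reverse with hQQ
  have hmaprev : (t.map (starRingEnd ℂ)).reverse =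
      (C u * m) * (g.map (starRingEnd ℂ)).reverse := by
    rw [hg, Polynomial.map_mul, Polynomial.reverse_mul_of_domain, hrevm]
  have hfact : s = m * (PP - QQ) := by
    rw [hsdef, hmaprev, hg, hPP, hQQ, C_mul]
    ring
  have hPQne : PP - QQ ≠ 0 := by
    intro h
    apply hsne
    rw [hfact, h, mul_zero]
  have hineq : ∀ z : ℂ, ‖z‖ = 1 → ‖eval z QQ‖ < ‖eval z PP‖ := by
    intro z hz
    rw [hQQ, hPP, Polynomial.eval_mul, Polynomial.eval_mul, Polynomial.eval_C,
      Polynomial.eval_C, norm_mul, norm_mul, normRevConj g z hz, norm_mul,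
      RCLike.norm_conj, hu1, mul_one]
    have hgz : 0 < ‖eval z g‖ := norm_pos_iff.mpr (hgcirc z hz)
    exact mul_lt_mul_of_pos_right hcoef hgz
  have hrou := rouche PP QQ hineq
  have hcb : (starRingEnd ℂ) b ≠ 0 := by
    intro h
    apply hb0
    simpa using congrArg (starRingEnd ℂ) h
  have hPProots : PP.roots = g.roots := Polynomial.roots_C_mul g hcb
  have hsroots2 : s.roots = cr + (PP - QQ).roots := by
    rw [hfact, Polynomial.roots_mul (by rw [← hfact]; exact hsne), hrootsm]
  -- filtered counts
  have hcrdisk : cr.filter (fun z => ‖z‖ < 1) = 0 :=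
    Multiset.filter_eq_nil.mpr (fun z hz => by rw [hcrall z hz]; norm_num)
  have hcrcirc : cr.filter (fun z => ‖z‖ = 1) = cr :=
    Multiset.filter_eq_self.mpr hcrall
  have hPQcirc : (PP - QQ).roots.filter (fun z => ‖z‖ = 1) = 0 := by
    apply Multiset.filter_eq_nil.mpr
    intro z hz hz1
    have hroot : eval z (PP - QQ) = 0 :=
      (Polynomial.mem_roots hPQne).mp hz
    rw [Polynomial.eval_sub, sub_eq_zero] at hroot
    have := hineq z hz1
    rw [hroot] at this
    exact lt_irrefl _ this
  have hzero_disk : (({0} : Multiset ℂ).filter (fun z => ‖z‖ < 1)) = {0} := by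
    rw [Multiset.filter_singleton, if_pos (by norm_num)]
  have hzero_circ : (({0} : Multiset ℂ).filter (fun z => ‖z‖ = 1)) = 0 := by
    rw [Multiset.filter_singleton, if_neg (by norm_num)]
    rfl
  refine ⟨hdegree, ?_, ?_⟩
  · -- disk count
    have e1 : Multiset.card (s.roots.filter (fun z => ‖z‖ < 1)) =
        Multiset.card (s.divX.roots.filter (fun z => ‖z‖ < 1)) + 1 := by
      rw [hsroots1, Multiset.filter_add, Multiset.card_add, hzero_disk,
        Multiset.card_singleton]
    have e2 : Multiset.card (s.roots.filter (fun z => ‖z‖ < 1)) =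
        Multiset.card (g.roots.filter (fun z => ‖z‖ < 1)) := by
      rw [hsroots2, Multiset.filter_add, Multiset.card_add, hcrdisk, hrou, hPProots]
      simp
    have e3 : Multiset.card (t.roots.filter (fun z => ‖z‖ < 1)) =
        Multiset.card (g.roots.filter (fun z => ‖z‖ < 1)) := by
      rw [hrootst, Multiset.filter_add, Multiset.card_add, hcrdisk]
      simp
    omega
  · -- circle count
    have e1 : Multiset.card (s.roots.filter (fun z => ‖z‖ = 1)) =
        Multiset.card (s.divX.roots.filter (fun z => ‖z‖ = 1)) := by
      rw [hsroots1, Multiset.filter_add, Multiset.card_add, hzero_circ]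
      simp
    have e2 : Multiset.card (s.roots.filter (fun z => ‖z‖ = 1)) = Multiset.card cr := by
      rw [hsroots2, Multiset.filter_add, Multiset.card_add, hcrcirc, hPQcirc]
      simp
    have e3 : Multiset.card (t.roots.filter (fun z => ‖z‖ = 1)) = Multiset.card cr := by
      rw [← hcr]
    omega
end

section
/- Let $h,g$ be analytic on the unit disk with $h(z)+g(z)=\frac{1}{2i}\log\frac{1+iz}{1-iz}$ and $g'(z)=\omega(z)h'(z)$ where $\omega(z)=\frac{a-z^2}{1-az^2}$ with $-1<a<1$. Then the dilatation $\tilde\omega$ of the convolution $f_{0,0}*f$, given by $\tilde\omega(z)=-z\cdot\frac{\omega'(z)(1+z^2)-2z\omega(z)(1+\omega(z))}{2(1+\omega(z))-z\omega'(z)(1+z^2)}$, satisfies $\tilde\omega(z)=z^2$ for all $z$ in the unit disk. -/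
/-!
Put `w = z²` and `Q = 1 - 2aw + w²`. Since `ω' = 2z(a² - 1)/(1 - aw)²` and
`1 + ω = (1 + a)(1 - w)/(1 - aw)`, the numerator and denominator of `ω̃` reduce to
`-2z(1 + a)Q/(1 - aw)²` and `2(1 + a)Q/(1 - aw)²`, whence `ω̃ = z²` wherever `Q ≠ 0`.
For `|a| ≤ 1` we have `Q = (1 - ζw)(1 - conj ζ w)` with `ζ = a + i√(1 - a²)` on the unit circle,
so `Q` does not vanish on the unit disk.
-/

open Complex ComplexConjugate

theorem one_sub_mul_ne_zero_of_norm_le_one {c w : ℂ} (hc : ‖c‖ ≤ 1) (hw : ‖w‖ < 1) :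
    1 - c * w ≠ 0 := by
  rw [sub_ne_zero]
  intro h
  have : ‖c * w‖ < 1 := by
    rw [norm_mul]
    nlinarith [norm_nonneg c, norm_nonneg w]
  rw [← h, norm_one] at this
  exact lt_irrefl 1 this

theorem one_sub_two_mul_add_sq_ne_zero {a : ℝ} (ha : |a| ≤ 1) {w : ℂ} (hw : ‖w‖ < 1) :
    1 - 2 * a * w + w ^ 2 ≠ 0 := by
  set ζ : ℂ := ⟨a, √(1 - a ^ 2)⟩
  have hζ : ‖ζ‖ = 1 := by
    have h : 0 ≤ 1 - a ^ 2 := by nlinarith [abs_nonneg a, sq_abs a]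
    rw [norm_def, normSq_mk, ← sq, ← sq, Real.sq_sqrt h, add_sub_cancel, Real.sqrt_one]
  have hfactor : 1 - 2 * a * w + w ^ 2 = (1 - ζ * w) * (1 - conj ζ * w) := by
    have hsum : ζ + conj ζ = 2 * a := by rw [add_conj]; simp [ζ]
    have hprod : ζ * conj ζ = 1 := by rw [mul_conj, normSq_eq_norm_sq, hζ]; simp
    linear_combination w * hsum - w ^ 2 * hprod
  rw [hfactor]
  exact mul_ne_zero (one_sub_mul_ne_zero_of_norm_le_one hζ.le hw)
    (one_sub_mul_ne_zero_of_norm_le_one ((norm_conj ζ).trans hζ).le hw)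

theorem hasDerivAt_div_one_sub_mul_sq {a z : ℂ} (hz : 1 - a * z ^ 2 ≠ 0) :
    HasDerivAt (fun w => (a - w ^ 2) / (1 - a * w ^ 2))
      (2 * z * (a ^ 2 - 1) / (1 - a * z ^ 2) ^ 2) z := by
  have hnum : HasDerivAt (fun w : ℂ => a - w ^ 2) (-(2 * z)) z := by
    simpa using (hasDerivAt_pow 2 z).const_sub a
  have hden : HasDerivAt (fun w : ℂ => 1 - a * w ^ 2) (-(a * (2 * z))) z := by
    simpa using ((hasDerivAt_pow 2 z).const_mul a).const_sub 1
  exact (hnum.div hden hz).congr_deriv (by ring)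

theorem dilatation_eq_sq {a z ω ω' : ℂ} (hz : 1 - a * z ^ 2 ≠ 0) (ha : 1 + a ≠ 0)
    (hQ : 1 - 2 * a * z ^ 2 + (z ^ 2) ^ 2 ≠ 0)
    (hω : ω = (a - z ^ 2) / (1 - a * z ^ 2))
    (hω' : ω' = 2 * z * (a ^ 2 - 1) / (1 - a * z ^ 2) ^ 2) :
    -z * (ω' * (1 + z ^ 2) - 2 * z * ω * (1 + ω)) / (2 * (1 + ω) - z * ω' * (1 + z ^ 2))
      = z ^ 2 := by
  -- the form in which `field_simp` looks for the denominator
  have hz' : 1 - z ^ 2 * a ≠ 0 := by rwa [mul_comm]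
  have hnum : ω' * (1 + z ^ 2) - 2 * z * ω * (1 + ω) =
      -(2 * z * (1 + a) * (1 - 2 * a * z ^ 2 + (z ^ 2) ^ 2) / (1 - a * z ^ 2) ^ 2) := by
    subst hω hω'
    field_simp
    ring
  have hden : 2 * (1 + ω) - z * ω' * (1 + z ^ 2) =
      2 * (1 + a) * (1 - 2 * a * z ^ 2 + (z ^ 2) ^ 2) / (1 - a * z ^ 2) ^ 2 := by
    subst hω hω'
    field_simp
    ring
  rw [hnum, hden]
  generalize 1 - 2 * a * z ^ 2 + (z ^ 2) ^ 2 = Q at hQ ⊢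
  field_simp

/-- With `ω(z) = (a-z²)/(1-az²)`, the dilatation of `f₀,₀ * f` equals `z²` on the unit disk. -/
theorem stmt_6 (a : ℝ) (ha : -1 < a) (ha' : a < 1) (ω : ℂ → ℂ)
    (hω : ∀ z : ℂ, ω z = ((a : ℂ) - z ^ 2) / (1 - (a : ℂ) * z ^ 2)) :
    ∀ z : ℂ, ‖z‖ < 1 →
      -z * (deriv ω z * (1 + z ^ 2) - 2 * z * ω z * (1 + ω z)) /
        (2 * (1 + ω z) - z * deriv ω z * (1 + z ^ 2)) = z ^ 2 := by
  intro z hz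
  have hz2 : ‖z ^ 2‖ < 1 := by simpa [norm_pow] using pow_lt_one₀ (norm_nonneg z) hz two_ne_zero
  have habs : |a| ≤ 1 := abs_le.mpr ⟨ha.le, ha'.le⟩
  have hden : 1 - (a : ℂ) * z ^ 2 ≠ 0 :=
    one_sub_mul_ne_zero_of_norm_le_one (by rwa [norm_real, Real.norm_eq_abs]) hz2
  refine dilatation_eq_sq hden ?_ (one_sub_two_mul_add_sq_ne_zero habs hz2) (hω z) ?_
  · exact_mod_cast (neg_lt_iff_pos_add'.mp ha).ne'
  · rw [funext hω]
    exact (hasDerivAt_div_one_sub_mul_sq hden).deriv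
end

section
/- For every $w$ in the open unit disk of $\mathbb{C}$ and every real $\alpha$ with $|\alpha|\le 2(\sqrt2-1)$, one has $1+|w|^2+|w|^4+|w|^6+\alpha(1+|w|^2+|w|^4)\operatorname{Re}(w)-\alpha\operatorname{Re}(w^3)>0$. -/
/-! With `r = ‖w‖`, the bounds `|Re w| ≤ r` and `|Re w³| ≤ r³` reduce the claim, for any `|α| ≤ 1`, to
`(r + r³ + r⁵) + r³ < 1 + r² + r⁴ + r⁶`, and the difference factors as `(1 - r)(1 - r³)(1 + r²) > 0`.
It remains to note `2(√2 - 1) ≤ 1`. -/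

lemma two_mul_sqrt_two_sub_one_le_one : 2 * (Real.sqrt 2 - 1) ≤ 1 := by
  nlinarith [Real.sq_sqrt (zero_le_two : (0 : ℝ) ≤ 2), Real.sqrt_nonneg 2]

lemma pos_of_abs_le_of_abs_le_pow_three {r a x y : ℝ} (hr₀ : 0 ≤ r) (hr : r < 1) (ha : |a| ≤ 1)
    (hx : |x| ≤ r) (hy : |y| ≤ r ^ 3) :
    0 < 1 + r ^ 2 + r ^ 4 + r ^ 6 + a * (1 + r ^ 2 + r ^ 4) * x - a * y := by
  have hax : -r ≤ a * x := by
    have : |a * x| ≤ r := by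
      rw [abs_mul]
      simpa using mul_le_mul ha hx (abs_nonneg x) zero_le_one
    exact (abs_le.1 this).1
  have hay : a * y ≤ r ^ 3 := by
    have : |a * y| ≤ r ^ 3 := by
      rw [abs_mul]
      simpa using mul_le_mul ha hy (abs_nonneg y) zero_le_one
    exact (abs_le.1 this).2
  have hr₃ : r ^ 3 < 1 := pow_lt_one₀ hr₀ hr three_ne_zero
  have hsum : -((1 + r ^ 2 + r ^ 4) * r) ≤ (1 + r ^ 2 + r ^ 4) * (a * x) := by
    rw [← mul_neg]
    exact mul_le_mul_of_nonneg_left hax (by positivity)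
  calc 0 < (1 - r) * (1 - r ^ 3) * (1 + r ^ 2) := by
        have := sub_pos.2 hr; have := sub_pos.2 hr₃; positivity
    _ = 1 + r ^ 2 + r ^ 4 + r ^ 6 - (1 + r ^ 2 + r ^ 4) * r - r ^ 3 := by ring
    _ ≤ 1 + r ^ 2 + r ^ 4 + r ^ 6 + a * (1 + r ^ 2 + r ^ 4) * x - a * y := by linarith

lemma pos_of_norm_lt_one_of_abs_le_one (w : ℂ) (hw : ‖w‖ < 1) (α : ℝ) (hα : |α| ≤ 1) :
    0 < 1 + ‖w‖ ^ 2 + ‖w‖ ^ 4 + ‖w‖ ^ 6 +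
      α * (1 + ‖w‖ ^ 2 + ‖w‖ ^ 4) * w.re - α * (w ^ 3).re :=
  pos_of_abs_le_of_abs_le_pow_three (norm_nonneg w) hw hα (Complex.abs_re_le_norm w)
    (norm_pow w 3 ▸ Complex.abs_re_le_norm (w ^ 3))

/-- Key positivity estimate: for `|w| < 1` and `|α| ≤ 2(√2-1)`,
`1+|w|²+|w|⁴+|w|⁶+α(1+|w|²+|w|⁴)Re(w)-αRe(w³) > 0`. -/
theorem stmt_7 (w : ℂ) (hw : ‖w‖ < 1) (α : ℝ) (hα : |α| ≤ 2 * (Real.sqrt 2 - 1)) :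
    0 < 1 + ‖w‖ ^ 2 + ‖w‖ ^ 4 + ‖w‖ ^ 6 +
      α * (1 + ‖w‖ ^ 2 + ‖w‖ ^ 4) * w.re - α * (w ^ 3).re :=
  pos_of_norm_lt_one_of_abs_le_one w hw α (hα.trans two_mul_sqrt_two_sub_one_le_one)
end

section
/- Let $n\in\mathbb{N}$, $\alpha\in[-2(\sqrt2-1),2(\sqrt2-1)]$, and define $F(z)=\frac{(1-z^{2^n})(1+z^{2^n}+\alpha z^{2^{n-1}})}{1+z^{2^{n+1}}}$. Then $\operatorname{Re}F(z)>0$ for all $z$ in the open unit disk. -/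
lemma keyG (x y α : ℝ) (hs : x^2 + y^2 < 1)
    (h1 : -(2 * (Real.sqrt 2 - 1)) ≤ α) (h2 : α ≤ 2 * (Real.sqrt 2 - 1)) :
    0 < (1 + (x^2+y^2)) * (1 + (x^2+y^2)^2) + α * x * (1 + 4*y^2 + (x^2+y^2)^2) := by
  have hb : 2 * (Real.sqrt 2 - 1) ≤ 5/6 := by
    nlinarith [Real.sq_sqrt (by norm_num : (2:ℝ) ≥ 0), Real.sqrt_nonneg 2]
  have h1' : -(5/6 : ℝ) ≤ α := by linarith
  have h2' : α ≤ 5/6 := by linarith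
  have hpos : 0 < 1 + 4*y^2 + (x^2+y^2)^2 := by positivity
  set t := |x| with htdef
  have ht0 : 0 ≤ t := abs_nonneg x
  have ht2 : t^2 = x^2 := sq_abs x
  have hs' : t^2 + y^2 < 1 := by rw [ht2]; exact hs
  have hkey : 5 * t * (1 + 4*y^2 + (t^2+y^2)^2) < 6 * ((1 + (t^2+y^2)) * (1 + (t^2+y^2)^2)) := by
    nlinarith [sq_nonneg (t-1), sq_nonneg (t*y), sq_nonneg y, sq_nonneg (t^2+y^2),
      sq_nonneg (t^2+y^2-1), sq_nonneg (2*t-1), sq_nonneg (3*t-1),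
      mul_nonneg ht0 (sq_nonneg y), sq_nonneg (t*(t^2+y^2)-1), sq_nonneg t]
  have habs : -(5/6 : ℝ) * t * (1 + 4*y^2 + (x^2+y^2)^2) ≤ α * x * (1 + 4*y^2 + (x^2+y^2)^2) := by
    have hx : -(5/6 : ℝ) * t ≤ α * x := by
      rcases le_or_gt 0 x with hx0 | hx0
      · have : t = x := abs_of_nonneg hx0
        nlinarith
      · have : t = -x := abs_of_neg hx0
        nlinarith
    exact mul_le_mul_of_nonneg_right hx (le_of_lt hpos)
  rw [ht2] at hkey
  nlinarith [hkey, habs]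

lemma keyW (α : ℝ) (h1 : -(2 * (Real.sqrt 2 - 1)) ≤ α) (h2 : α ≤ 2 * (Real.sqrt 2 - 1))
    (w : ℂ) (hw : ‖w‖ < 1) :
    0 < (((1 - w^2) * (1 + w^2 + (α:ℂ) * w)) / (1 + w^4)).re := by
  set x := w.re with hx
  set y := w.im with hy
  have hns : x^2 + y^2 < 1 := by
    have h := Complex.sq_norm w
    have : Complex.normSq w < 1 := by
      rw [← h]
      calc ‖w‖ ^ 2 = ‖w‖^2 := rfl
        _ < 1 := by nlinarith [norm_nonneg w]
    simpa [Complex.normSq_apply, sq] using this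
  have hd : (1 + w^4) ≠ 0 := by
    intro h
    have hw4 : w^4 = -1 := by linear_combination h
    have : ‖w^4‖ = 1 := by rw [hw4]; simp
    rw [norm_pow] at this
    have h4 : ‖w‖^4 < 1 := pow_lt_one₀ (norm_nonneg w) hw (by norm_num)
    linarith
  have hnsd : 0 < Complex.normSq (1 + w^4) := Complex.normSq_pos.mpr hd
  have hG := keyG x y α hns h1 h2
  have h1s : 0 < 1 - (x^2+y^2) := by linarith
  rw [Complex.div_re]
  rw [← add_div]
  apply div_pos _ hnsd
  have hexp := mul_pos h1s hG
  simp only [Complex.add_re, Complex.add_im, Complex.mul_re, Complex.mul_im,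
    Complex.sub_re, Complex.sub_im, Complex.one_re, Complex.one_im,
    Complex.ofReal_re, Complex.ofReal_im, pow_succ, pow_zero, one_mul,
    ← hx, ← hy]
  nlinarith [hexp]

/-- For `n ≥ 1` and `α ∈ [-2(√2-1), 2(√2-1)]`, the function
`F(z) = (1-z^{2ⁿ})(1+z^{2ⁿ}+αz^{2ⁿ⁻¹})/(1+z^{2ⁿ⁺¹})` has positive real part on the disk. -/
theorem stmt_8 (n : ℕ) (hn : 1 ≤ n) (α : ℝ)
    (hα : -(2 * (Real.sqrt 2 - 1)) ≤ α) (hα' : α ≤ 2 * (Real.sqrt 2 - 1)) :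
    ∀ z : ℂ, ‖z‖ < 1 →
      0 < (((1 - z ^ (2 ^ n)) * (1 + z ^ (2 ^ n) + (α : ℂ) * z ^ (2 ^ (n - 1)))) /
        (1 + z ^ (2 ^ (n + 1)))).re := by
  intro z hz
  set w := z ^ (2 ^ (n-1)) with hwdef
  have hw : ‖w‖ < 1 := by
    rw [hwdef, norm_pow]
    exact pow_lt_one₀ (norm_nonneg z) hz (by positivity)
  have e1 : z ^ (2^n) = w^2 := by
    rw [hwdef, ← pow_mul, ← pow_succ, Nat.sub_add_cancel hn]
  have e2 : z ^ (2^(n+1)) = w^4 := by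
    rw [hwdef, ← pow_mul]
    congr 1
    have : n + 1 = (n - 1) + 2 := by omega
    rw [this, pow_add]; norm_num
  rw [e1, e2]
  exact keyW α hα hα' w hw
end

section
/- Let $\omega_1,\omega_2$ be analytic self-maps of the open unit disk with $|\omega_1(z)|<1$ and $|\omega_2(z)|<1$, and let $0\le t\le 1$. Then the function $\tilde\omega(z)=\frac{t\omega_1(z)+(1-t)\omega_2(z)+\omega_1(z)\omega_2(z)}{1+t\omega_2(z)+(1-t)\omega_1(z)}$ satisfies $|\tilde\omega(z)|<1$ for all $z$ in the unit disk. -/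
open Metric

lemma key_normSq (a b : ℂ) (t : ℝ) :
    Complex.normSq (1 + (t : ℂ) * b + (1 - (t : ℂ)) * a) -
      Complex.normSq ((t : ℂ) * a + (1 - (t : ℂ)) * b + a * b) =
    t * (1 - Complex.normSq a) * Complex.normSq (1 + b) +
      (1 - t) * (1 - Complex.normSq b) * Complex.normSq (1 + a) := by
  simp only [Complex.normSq_apply, Complex.add_re, Complex.add_im, Complex.mul_re,
    Complex.mul_im, Complex.sub_re, Complex.sub_im, Complex.one_re, Complex.one_im,
    Complex.ofReal_re, Complex.ofReal_im]
  ring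

/-- The dilatation of the convex combination of two shears is bounded by one. -/
theorem stmt_10 (ω₁ ω₂ : ℂ → ℂ)
    (hω₁ : DifferentiableOn ℂ ω₁ (ball 0 1)) (hω₂ : DifferentiableOn ℂ ω₂ (ball 0 1))
    (hb₁ : ∀ z ∈ ball (0 : ℂ) 1, ‖ω₁ z‖ < 1) (hb₂ : ∀ z ∈ ball (0 : ℂ) 1, ‖ω₂ z‖ < 1)
    (t : ℝ) (ht0 : 0 ≤ t) (ht1 : t ≤ 1) :
    ∀ z ∈ ball (0 : ℂ) 1,
      ‖((t : ℂ) * ω₁ z + (1 - (t : ℂ)) * ω₂ z + ω₁ z * ω₂ z) /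
        (1 + (t : ℂ) * ω₂ z + (1 - (t : ℂ)) * ω₁ z)‖ < 1 := by
  intro z hz
  set a := ω₁ z
  set b := ω₂ z
  have ha : ‖a‖ < 1 := hb₁ z hz
  have hb : ‖b‖ < 1 := hb₂ z hz
  set N : ℂ := (t : ℂ) * a + (1 - (t : ℂ)) * b + a * b with hN
  set D : ℂ := 1 + (t : ℂ) * b + (1 - (t : ℂ)) * a with hD
  -- positivity of the difference
  have hnsa : Complex.normSq a < 1 := by
    have := Complex.sq_norm a
    nlinarith [norm_nonneg a]
  have hnsb : Complex.normSq b < 1 := by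
    have := Complex.sq_norm b
    nlinarith [norm_nonneg b]
  have hane : (1 : ℂ) + a ≠ 0 := by
    intro h
    have : a = -1 := by linear_combination h
    rw [this] at ha; simp at ha
  have hbne : (1 : ℂ) + b ≠ 0 := by
    intro h
    have : b = -1 := by linear_combination h
    rw [this] at hb; simp at hb
  have hpa : 0 < Complex.normSq (1 + a) := Complex.normSq_pos.2 hane
  have hpb : 0 < Complex.normSq (1 + b) := Complex.normSq_pos.2 hbne
  have hdiff : 0 < Complex.normSq D - Complex.normSq N := by
    rw [hN, hD, key_normSq]
    rcases lt_or_eq_of_le ht0 with h0 | h0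
    · have h1 : 0 < t * (1 - Complex.normSq a) * Complex.normSq (1 + b) :=
        mul_pos (mul_pos h0 (sub_pos.2 hnsa)) hpb
      nlinarith [mul_nonneg (mul_nonneg (sub_nonneg.2 ht1) (sub_nonneg.2 hnsb.le)) hpa.le]
    · have h1 : 0 < (1 - t) * (1 - Complex.normSq b) * Complex.normSq (1 + a) := by
        rw [← h0]; norm_num
        exact mul_pos (sub_pos.2 hnsb) hpa
      nlinarith [mul_nonneg (mul_nonneg ht0 (sub_nonneg.2 hnsa.le)) hpb.le]
  have hNlt : ‖N‖ < ‖D‖ := by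
    have h1 := Complex.sq_norm N
    have h2 := Complex.sq_norm D
    nlinarith [norm_nonneg N, norm_nonneg D]
  have hDne : D ≠ 0 := by
    intro h
    rw [h] at hNlt
    simp at hNlt
    exact absurd hNlt (not_lt.2 (norm_nonneg N))
  rw [norm_div]
  rw [div_lt_one (lt_of_le_of_lt (norm_nonneg N) hNlt)]
  exact hNlt
end

section
/- For $0<t<1$ and $-2(\sqrt2-1)\le\alpha_1<\alpha_2\le 2(\sqrt2-1)$, all six zeros of the polynomial $p(w)=w^6+(t-1)w^5+(\alpha_2+(1+\alpha_1-\alpha_2)t)w^4+\alpha_2(t-1)w^3+(1+\alpha_1 t)w^2+(t-1)w+t$ lie in the open unit disk $|w|<1$. -/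
set_option maxHeartbeats 16000000


lemma key_real (x y s α₁ α₂ M n1 n2 p q m1 m2 : ℝ)
    (hM0 : 0 < M) (hM1 : M < 1) (hMq : M^2 + 4*M = 4)
    (hs : s = x^2 + y^2) (h1s : 1 ≤ s)
    (ha1 : -M ≤ α₁) (ha2 : α₂ ≤ M) (h12 : α₁ < α₂)
    (hn1 : n1 = s^2 + x^2 - y^2 - s*x - x)
    (hn2 : n2 = y - s*y - 2*x*y)
    (hp : p = (s^2+1)*(x^2-y^2))
    (hq : q = (s^2-1)*(2*x*y))
    (hm1 : m1 = p^2 + q^2 + (α₁+α₂)*s^2*p + α₁*α₂*s^4)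
    (hm2 : m2 = (α₂-α₁)*s^2*q)
    (hIm : n1*m2 + n2*m1 = 0)
    (hRe : n1*m1 - n2*m2 < 0) : False := by
  have ha1M : α₁ ≤ M := le_trans h12.le ha2
  have haM2 : -M ≤ α₂ := le_trans ha1 h12.le
  by_cases hy : y = 0
  · -- real case
    subst hy
    have hsx : s = x^2 := by rw [hs]; ring
    subst hsx
    have hx2 : 1 ≤ x^2 := h1s
    have hA : 0 < x^4 + α₁*x^2 + 1 := by
      nlinarith [mul_nonneg (by linarith : (0:ℝ) ≤ α₁ + M) (sq_nonneg x),
        mul_nonneg (by linarith : (0:ℝ) ≤ 1 - M) (sq_nonneg x),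
        sq_nonneg (x^2 - 1/2)]
    have hB : 0 < x^4 + α₂*x^2 + 1 := by
      nlinarith [mul_nonneg (by linarith : (0:ℝ) ≤ α₂ + M) (sq_nonneg x),
        mul_nonneg (by linarith : (0:ℝ) ≤ 1 - M) (sq_nonneg x),
        sq_nonneg (x^2 - 1/2)]
    have hxx : 0 ≤ x*(x-1) := by
      rcases le_or_gt 1 x with h | h
      · nlinarith
      · have hx' : x ≤ -1 := by nlinarith
        nlinarith
    have hfact : n1*m1 - n2*m2 = (x^4*(x^2+1)) * (x*(x-1)) *
        ((x^4+α₁*x^2+1)*(x^4+α₂*x^2+1)) := by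
      rw [hn1, hm1, hn2, hm2, hp, hq]; ring
    have : 0 ≤ (x^4*(x^2+1)) * (x*(x-1)) * ((x^4+α₁*x^2+1)*(x^4+α₂*x^2+1)) := by
      apply mul_nonneg (mul_nonneg (by positivity) hxx) (mul_pos hA hB).le
    linarith [hfact ▸ hRe]
  · -- y ≠ 0
    rw [hq] at hm2
    rw [hn2, hm2] at hIm hRe
    have h0 : y * (2*x*((α₂-α₁)*s^2*(s^2-1))*n1 - (s-1+2*x)*m1) = 0 := by
      linear_combination hIm
    have hE : (s-1+2*x)*m1 = 2*x*((α₂-α₁)*s^2*(s^2-1))*n1 := by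
      rcases mul_eq_zero.1 h0 with h | h
      · exact absurd h hy
      · linarith
    have hRed : (n1*m1 - (y - s*y - 2*x*y)*((α₂-α₁)*s^2*((s^2-1)*(2*x*y))))*(s-1+2*x)
        = 2*x*((α₂-α₁)*s^2*(s^2-1))*(n1^2 + y^2*(s-1+2*x)^2) := by
      linear_combination n1 * hE
    clear hIm h0 hn2 hm2
    rcases h1s.eq_or_lt with heq | hgt
    · -- s = 1
      have hsx : s = 1 := heq.symm
      subst hsx
      have hm1x : x*m1 = 0 := by linear_combination (1/2) * hE
      have hre2 : n1*m1 < 0 := by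
        have e : n1*m1 - (y - 1*y - 2*x*y)*((α₂-α₁)*1^2*((1^2-1)*(2*x*y))) = n1*m1 := by ring
        linarith [e ▸ hRe]
      rcases mul_eq_zero.1 hm1x with hx0 | hm10
      · rw [hx0] at hs
        have hn10 : n1 = 0 := by rw [hn1, hx0]; linarith
        rw [hn10] at hre2; nlinarith
      · rw [hm10] at hre2; nlinarith
    · -- s > 1
      have hK : 0 < (α₂-α₁)*s^2*(s^2-1) := by
        apply mul_pos (mul_pos (by linarith) (by nlinarith)) (by nlinarith)
      rcases lt_trichotomy x 0 with hx | hx | hx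
      · -- x < 0
        have hn1pos : 0 < n1 := by
          clear hRe hRed hE hm1 hp hq
          rw [hn1]
          nlinarith [mul_pos (show (0:ℝ) < s by linarith) (show (0:ℝ) < s - 1 by linarith),
            mul_pos (neg_pos.2 hx) (show (0:ℝ) < s + 1 by linarith), sq_nonneg x, hs]
        rcases le_or_gt (s-1+2*x) 0 with hD | hD
        · have h1 : 0 ≤ (n1*m1 - (y - s*y - 2*x*y)*((α₂-α₁)*s^2*((s^2-1)*(2*x*y))))*(s-1+2*x) :=
            mul_nonneg_of_nonpos_of_nonpos hRe.le hD
          have hb : 0 < n1^2 + y^2*(s-1+2*x)^2 := by positivity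
          have h2 : 2*x*((α₂-α₁)*s^2*(s^2-1))*(n1^2 + y^2*(s-1+2*x)^2) < 0 := by
            apply mul_neg_of_neg_of_pos _ hb
            nlinarith [hK]
          linarith [hRed]
        · -- x < 0, D > 0 : the key region
          have hy2pos : 0 < y^2 := by positivity
          have hx2 : 4*x^2 < (s-1)^2 := by
            clear hRe hRed hE hm1 hp hq hn1
            nlinarith [mul_pos (show (0:ℝ) < s-1-2*x by linarith) (show (0:ℝ) < s-1+2*x by linarith)]
          have hy2s : y^2 ≤ s := by nlinarith [sq_nonneg x]
          have e1 : 16*x^2*y^2 < (s^2-1)^2 := by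
            clear hRe hRed hE hm1 hp hq hn1 hs
            nlinarith [mul_lt_mul_of_pos_right hx2 hy2pos,
              mul_le_mul_of_nonneg_left hy2s (sq_nonneg (s-1)),
              sq_nonneg ((s-1)^2)]
          have e8 : p^2+q^2-4*s^4 = s^2*((s^2-1)^2-16*x^2*y^2) := by
            clear hRe hRed hE hm1 hn1
            rw [hp, hq, hs]; ring
          have hPQ : 4*s^4 < p^2 + q^2 := by
            have e7 : 0 < s^2*((s^2-1)^2 - 16*x^2*y^2) :=
              mul_pos (by positivity) (by linarith)
            linarith
          have hm1pos : 0 < m1 := by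
            clear hRe hRed hE hn1 hp hq e8 e1 hx2
            have hα1sq : α₁^2 ≤ M^2 := by nlinarith
            have hα2sq : α₂^2 ≤ M^2 := by nlinarith
            have hM2 : M^2 < 2 := by nlinarith
            have c3 : (0:ℝ) < s^4 := by positivity
            have c5 : 0 < (8 - 2*α₁^2 - 2*α₂^2)*s^4 :=
              mul_pos (by nlinarith) c3
            rw [hm1]
            nlinarith [hPQ, sq_nonneg (p + (α₁+α₂)*s^2), sq_nonneg q, c5]
          have hL : 0 < (s-1+2*x)*m1 := mul_pos hD hm1pos
          have hR : 2*x*((α₂-α₁)*s^2*(s^2-1))*n1 < 0 := by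
            clear hRe hRed hE hm1 hp hq hn1 e8 e1 hx2
            have := mul_pos hK hn1pos
            nlinarith
          linarith [hE]
      · -- x = 0
        subst hx
        have h1 : (n1*m1 - (y - s*y - 2*0*y)*((α₂-α₁)*s^2*((s^2-1)*(2*0*y))))*(s-1+2*0) < 0 :=
          mul_neg_of_neg_of_pos hRe (by linarith)
        clear hRe hE hm1 hp hq hn1
        nlinarith [hRed]
      · -- x > 0
        have hD : 0 < s-1+2*x := by linarith
        have hL : (n1*m1 - (y - s*y - 2*x*y)*((α₂-α₁)*s^2*((s^2-1)*(2*x*y))))*(s-1+2*x) < 0 :=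
          mul_neg_of_neg_of_pos hRe hD
        have hb : 0 ≤ n1^2 + y^2*(s-1+2*x)^2 := by positivity
        have hR : 0 ≤ 2*x*((α₂-α₁)*s^2*(s^2-1))*(n1^2 + y^2*(s-1+2*x)^2) :=
          mul_nonneg (mul_nonneg (by linarith) hK.le) hb
        linarith [hRed]




/-- All six zeros of the sextic arising from the convex combination with dilatations
`ω₁(z) = -z^{2ⁿ⁻²}`, `ω₂(z) = z^{2ⁿ⁻¹}` lie in the open unit disk. -/
theorem stmt_11 (t α₁ α₂ : ℝ) (ht0 : 0 < t) (ht1 : t < 1)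
    (hα₁ : -(2 * (Real.sqrt 2 - 1)) ≤ α₁) (hα₂ : α₂ ≤ 2 * (Real.sqrt 2 - 1))
    (h12 : α₁ < α₂) :
    ∀ w : ℂ, w ^ 6 + ((t : ℂ) - 1) * w ^ 5 +
      ((α₂ : ℂ) + (1 + (α₁ : ℂ) - (α₂ : ℂ)) * (t : ℂ)) * w ^ 4 +
      (α₂ : ℂ) * ((t : ℂ) - 1) * w ^ 3 + (1 + (α₁ : ℂ) * (t : ℂ)) * w ^ 2 +
      ((t : ℂ) - 1) * w + (t : ℂ) = 0 → ‖w‖ < 1 := by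
  have hsqrt2 : (Real.sqrt 2)^2 = 2 := Real.sq_sqrt (by norm_num)
  have hsqrt2' : (0:ℝ) ≤ Real.sqrt 2 := Real.sqrt_nonneg 2
  have hM0 : 0 < 2 * (Real.sqrt 2 - 1) := by nlinarith
  have hM1 : 2 * (Real.sqrt 2 - 1) < 1 := by nlinarith
  have hMq : (2 * (Real.sqrt 2 - 1))^2 + 4*(2 * (Real.sqrt 2 - 1)) = 4 := by nlinarith
  intro w hw
  by_contra hcon
  push_neg at hcon
  -- convex combination structure
  have hcomb : (t:ℂ) * ((w^2+1)*(w^4+(α₁:ℂ)*w^2+1))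
      + (1-(t:ℂ)) * (w*(w-1)*(w^4+(α₂:ℂ)*w^2+1)) = 0 := by
    linear_combination hw
  have htC : (t:ℂ) ≠ 0 := Complex.ofReal_ne_zero.mpr ht0.ne'
  have hw0 : w ≠ 0 := by
    intro h
    rw [h, norm_zero] at hcon
    linarith
  by_cases hP2 : w*(w-1)*(w^4+(α₂:ℂ)*w^2+1) = 0
  · -- common zero analysis
    have hP1 : (w^2+1)*(w^4+(α₁:ℂ)*w^2+1) = 0 := by
      have h1 : (t:ℂ) * ((w^2+1)*(w^4+(α₁:ℂ)*w^2+1)) = 0 := by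
        rw [hP2] at hcomb; simpa using hcomb
      exact (mul_eq_zero.1 h1).resolve_left htC
    rcases mul_eq_zero.1 hP2 with h1 | hq2
    · rcases mul_eq_zero.1 h1 with h2 | h3
      · exact hw0 h2
      · -- w = 1
        have hw1 : w = 1 := by linear_combination h3
        rw [hw1] at hP1
        have : (α₁:ℂ) = -2 := by linear_combination (1/2) * hP1
        have : α₁ = -2 := by exact_mod_cast this
        nlinarith
    · rcases mul_eq_zero.1 hP1 with h2 | hq1
      · -- w² = -1
        have : (α₂:ℂ) = 2 := by linear_combination (w^2+(α₂:ℂ)-1)*h2 - hq2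
        have : α₂ = 2 := by exact_mod_cast this
        nlinarith
      · -- both quartics vanish
        have h3 : ((α₁:ℂ)-α₂)*w^2 = 0 := by linear_combination hq1 - hq2
        rcases mul_eq_zero.1 h3 with h4 | h4
        · have : α₁ = α₂ := by
            have : (α₁:ℂ) = α₂ := by linear_combination h4
            exact_mod_cast this
          linarith
        · exact hw0 (by simpa using pow_eq_zero_iff (n := 2) (by norm_num) |>.1 h4)
  · -- main case : P₂ ≠ 0
    have hs1 : 1 ≤ w.re^2 + w.im^2 := by
      have h2 := Complex.sq_norm w
      rw [Complex.normSq_apply] at h2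
      have h3 : 1 ≤ ‖w‖ := hcon
      nlinarith
    have hZ : ((t:ℝ):ℂ) * (((w^2+1)*(w^4+(α₁:ℂ)*w^2+1)) * (starRingEnd ℂ) (w*(w-1)*(w^4+(α₂:ℂ)*w^2+1)))
        = ((-((1-t)*Complex.normSq (w*(w-1)*(w^4+(α₂:ℂ)*w^2+1))) : ℝ) : ℂ) := by
      push_cast
      rw [← Complex.mul_conj]
      linear_combination ((starRingEnd ℂ) (w*(w-1)*(w^4+(α₂:ℂ)*w^2+1))) * hcomb
    have hZim : (((w^2+1)*(w^4+(α₁:ℂ)*w^2+1)) * (starRingEnd ℂ) (w*(w-1)*(w^4+(α₂:ℂ)*w^2+1))).im = 0 := by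
      have him := congrArg Complex.im hZ
      rw [Complex.im_ofReal_mul, Complex.ofReal_im] at him
      exact (mul_eq_zero.1 him).resolve_left ht0.ne'
    have hZre : (((w^2+1)*(w^4+(α₁:ℂ)*w^2+1)) * (starRingEnd ℂ) (w*(w-1)*(w^4+(α₂:ℂ)*w^2+1))).re < 0 := by
      have hre := congrArg Complex.re hZ
      rw [Complex.re_ofReal_mul, Complex.ofReal_re] at hre
      have hns : 0 < Complex.normSq (w*(w-1)*(w^4+(α₂:ℂ)*w^2+1)) := Complex.normSq_pos.2 hP2
      by_contra h
      push_neg at h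
      nlinarith [mul_nonneg ht0.le h, mul_pos (sub_pos.2 ht1) hns]
    have hcP₂ : (starRingEnd ℂ) (w*(w-1)*(w^4+(α₂:ℂ)*w^2+1))
        = ((starRingEnd ℂ) w) * (((starRingEnd ℂ) w) - 1) * (((starRingEnd ℂ) w)^4 + (α₂:ℂ)*((starRingEnd ℂ) w)^2 + 1) := by
      simp only [map_mul, map_sub, map_add, map_pow, map_one, Complex.conj_ofReal]
    have hnsq : Complex.normSq w = w.re^2+w.im^2 := by rw [Complex.normSq_apply]; ring
    have hScx : ((w.re^2+w.im^2:ℝ):ℂ) = w * (starRingEnd ℂ) w := by rw [Complex.mul_conj, hnsq]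
    have key : ((w.re^2+w.im^2:ℝ):ℂ)^2 * ((w^2+1)*(w^4+(α₁:ℂ)*w^2+1) * (starRingEnd ℂ) (w*(w-1)*(w^4+(α₂:ℂ)*w^2+1)))
        = (((w.re^2+w.im^2:ℝ):ℂ)^2 + ((starRingEnd ℂ) w)^2 - ((w.re^2+w.im^2:ℝ):ℂ)*w - ((starRingEnd ℂ) w)) * ((((w.re^2+w.im^2:ℝ):ℂ)^2*w^2 + ((starRingEnd ℂ) w)^2 + (α₁:ℂ)*((w.re^2+w.im^2:ℝ):ℂ)^2) * (((w.re^2+w.im^2:ℝ):ℂ)^2*((starRingEnd ℂ) w)^2 + w^2 + (α₂:ℂ)*((w.re^2+w.im^2:ℝ):ℂ)^2)) := by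
      rw [hcP₂, hScx]; ring
    have hc2 : ((w.re^2+w.im^2:ℝ):ℂ)^2 = ((((w.re^2+w.im^2))^2 : ℝ) : ℂ) := by push_cast; ring
    conv at key => lhs; rw [hc2]
    have kim := congrArg Complex.im key
    have kre := congrArg Complex.re key
    rw [Complex.im_ofReal_mul, hZim, mul_zero] at kim
    rw [Complex.re_ofReal_mul] at kre
    have eIm : ((((w.re^2+w.im^2:ℝ):ℂ)^2 + ((starRingEnd ℂ) w)^2 - ((w.re^2+w.im^2:ℝ):ℂ)*w - ((starRingEnd ℂ) w)) * ((((w.re^2+w.im^2:ℝ):ℂ)^2*w^2 + ((starRingEnd ℂ) w)^2 + (α₁:ℂ)*((w.re^2+w.im^2:ℝ):ℂ)^2) * (((w.re^2+w.im^2:ℝ):ℂ)^2*((starRingEnd ℂ) w)^2 + w^2 + (α₂:ℂ)*((w.re^2+w.im^2:ℝ):ℂ)^2))).im = ((w.re^2+w.im^2)^2 + w.re^2 - w.im^2 - (w.re^2+w.im^2)*w.re - w.re)*((α₂-α₁)*(w.re^2+w.im^2)^2*(((w.re^2+w.im^2)^2-1)*(2*w.re*w.im))) + (w.im - (w.re^2+w.im^2)*w.im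 - 2*w.re*w.im)*((((w.re^2+w.im^2)^2+1)*(w.re^2-w.im^2))^2 + (((w.re^2+w.im^2)^2-1)*(2*w.re*w.im))^2 + (α₁+α₂)*(w.re^2+w.im^2)^2*(((w.re^2+w.im^2)^2+1)*(w.re^2-w.im^2)) + α₁*α₂*(w.re^2+w.im^2)^4) := by
      simp only [Complex.mul_re, Complex.mul_im, Complex.add_re, Complex.add_im, Complex.sub_re, Complex.sub_im, Complex.one_re, Complex.one_im, Complex.ofReal_re, Complex.ofReal_im, Complex.conj_re, Complex.conj_im, pow_succ, pow_zero, one_mul]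
      ring
    have eRe : ((((w.re^2+w.im^2:ℝ):ℂ)^2 + ((starRingEnd ℂ) w)^2 - ((w.re^2+w.im^2:ℝ):ℂ)*w - ((starRingEnd ℂ) w)) * ((((w.re^2+w.im^2:ℝ):ℂ)^2*w^2 + ((starRingEnd ℂ) w)^2 + (α₁:ℂ)*((w.re^2+w.im^2:ℝ):ℂ)^2) * (((w.re^2+w.im^2:ℝ):ℂ)^2*((starRingEnd ℂ) w)^2 + w^2 + (α₂:ℂ)*((w.re^2+w.im^2:ℝ):ℂ)^2))).re = ((w.re^2+w.im^2)^2 + w.re^2 - w.im^2 - (w.re^2+w.im^2)*w.re - w.re)*((((w.re^2+w.im^2)^2+1)*(w.re^2-w.im^2))^2 + (((w.re^2+w.im^2)^2-1)*(2*w.re*w.im))^2 + (α₁+α₂)*(w.re^2+w.im^2)^2*(((w.re^2+w.im^2)^2+1)*(w.re^2-w.im^2)) + α₁*α₂*(w.re^2+w.im^2)^4) - (w.im - (w.re^2+w.im^2)*w.im - 2*w.re*w.im)*((α₂-α₁)*(w.re^2+w.im^2)^2*(((w.re^2+w.im^2)^2-1)*(2*w.re*w.im))) := by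
      simp only [Complex.mul_re, Complex.mul_im, Complex.add_re, Complex.add_im, Complex.sub_re, Complex.sub_im, Complex.one_re, Complex.one_im, Complex.ofReal_re, Complex.ofReal_im, Complex.conj_re, Complex.conj_im, pow_succ, pow_zero, one_mul]
      ring
    have hImF : ((w.re^2+w.im^2)^2 + w.re^2 - w.im^2 - (w.re^2+w.im^2)*w.re - w.re)*((α₂-α₁)*(w.re^2+w.im^2)^2*(((w.re^2+w.im^2)^2-1)*(2*w.re*w.im))) + (w.im - (w.re^2+w.im^2)*w.im - 2*w.re*w.im)*((((w.re^2+w.im^2)^2+1)*(w.re^2-w.im^2))^2 + (((w.re^2+w.im^2)^2-1)*(2*w.re*w.im))^2 + (α₁+α₂)*(w.re^2+w.im^2)^2*(((w.re^2+w.im^2)^2+1)*(w.re^2-w.im^2)) + α₁*α₂*(w.re^2+w.im^2)^4) = 0 := by rw [← eIm]; exact kim.symm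
    have hReF : ((w.re^2+w.im^2)^2 + w.re^2 - w.im^2 - (w.re^2+w.im^2)*w.re - w.re)*((((w.re^2+w.im^2)^2+1)*(w.re^2-w.im^2))^2 + (((w.re^2+w.im^2)^2-1)*(2*w.re*w.im))^2 + (α₁+α₂)*(w.re^2+w.im^2)^2*(((w.re^2+w.im^2)^2+1)*(w.re^2-w.im^2)) + α₁*α₂*(w.re^2+w.im^2)^4) - (w.im - (w.re^2+w.im^2)*w.im - 2*w.re*w.im)*((α₂-α₁)*(w.re^2+w.im^2)^2*(((w.re^2+w.im^2)^2-1)*(2*w.re*w.im))) < 0 := by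
      rw [← eRe, ← kre]
      exact mul_neg_of_pos_of_neg (by nlinarith [hs1]) hZre
    exact key_real w.re w.im (w.re^2+w.im^2) α₁ α₂ (2*(Real.sqrt 2 - 1)) ((w.re^2+w.im^2)^2 + w.re^2 - w.im^2 - (w.re^2+w.im^2)*w.re - w.re) (w.im - (w.re^2+w.im^2)*w.im - 2*w.re*w.im) (((w.re^2+w.im^2)^2+1)*(w.re^2-w.im^2)) (((w.re^2+w.im^2)^2-1)*(2*w.re*w.im)) ((((w.re^2+w.im^2)^2+1)*(w.re^2-w.im^2))^2 + (((w.re^2+w.im^2)^2-1)*(2*w.re*w.im))^2 + (α₁+α₂)*(w.re^2+w.im^2)^2*(((w.re^2+w.im^2)^2+1)*(w.re^2-w.im^2)) + α₁*α₂*(w.re^2+w.im^2)^4) ((α₂-α₁)*(w.re^2+w.im^2)^2*(((w.re^2+w.im^2)^2-1)*(2*w.re*w.im)))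
      hM0 hM1 hMq rfl hs1 hα₁ hα₂ h12 rfl rfl rfl rfl rfl rfl hImF hReF
end

section
/- For all $a$ with $0<a<1$: $|1-2a-8a^2+8a^3-8a^4-2a^5+a^6|<|2-a-4a^2+16a^3-4a^4-a^5+2a^6|$, and hence the unique zero $z=-\frac{1-2a-8a^2+8a^3-8a^4-2a^5+a^6}{2-a-4a^2+16a^3-4a^4-a^5+2a^6}$ of the linear polynomial $p_3(z)=(2-a-4a^2+16a^3-4a^4-a^5+2a^6)z+(1-2a-8a^2+8a^3-8a^4-2a^5+a^6)$ lies in the open unit disk. -/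
/-! The leading coefficient `D` and the constant term `N` of `p₃` are palindromic sextics with
`D - N = 1 + a + 4a² + 8a³ + 4a⁴ + a⁵ + a⁶` and `D + N = 3 (1 - a)² (a⁴ + a³ - 3a² + a + 1)`.
Both are positive for `0 < a ≠ 1`, since the quartic is `(a² - 1)² + a (a - 1)² + a²`;
hence `-D < N < D`. -/

namespace CohnP3

def lead (a : ℝ) : ℝ := 2 - a - 4 * a ^ 2 + 16 * a ^ 3 - 4 * a ^ 4 - a ^ 5 + 2 * a ^ 6

def const (a : ℝ) : ℝ := 1 - 2 * a - 8 * a ^ 2 + 8 * a ^ 3 - 8 * a ^ 4 - 2 * a ^ 5 + a ^ 6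

lemma lead_sub_const (a : ℝ) :
    lead a - const a = 1 + a + 4 * a ^ 2 + 8 * a ^ 3 + 4 * a ^ 4 + a ^ 5 + a ^ 6 := by
  unfold lead const; ring

lemma lead_add_const (a : ℝ) :
    lead a + const a = 3 * (1 - a) ^ 2 * (a ^ 4 + a ^ 3 - 3 * a ^ 2 + a + 1) := by
  unfold lead const; ring

lemma quartic_pos {a : ℝ} (ha : 0 < a) : 0 < a ^ 4 + a ^ 3 - 3 * a ^ 2 + a + 1 := by
  have hsos : a ^ 4 + a ^ 3 - 3 * a ^ 2 + a + 1 = (a ^ 2 - 1) ^ 2 + a * (a - 1) ^ 2 + a ^ 2 := by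
    ring
  rw [hsos]
  positivity

lemma lead_sub_const_pos {a : ℝ} (ha : 0 ≤ a) : 0 < lead a - const a := by
  rw [lead_sub_const]
  positivity

lemma lead_add_const_pos {a : ℝ} (ha : 0 < a) (ha1 : a ≠ 1) : 0 < lead a + const a := by
  rw [lead_add_const]
  have : 1 - a ≠ 0 := sub_ne_zero.mpr ha1.symm
  have := quartic_pos ha
  positivity

lemma abs_const_lt_lead {a : ℝ} (ha : 0 < a) (ha1 : a ≠ 1) : |const a| < lead a := by
  have hsub := lead_sub_const_pos ha.le
  have hadd := lead_add_const_pos ha ha1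
  rw [abs_lt]
  constructor <;> linarith

end CohnP3

lemma abs_neg_div_lt_one_of_abs_lt {K : Type*} [Field K] [LinearOrder K] [IsStrictOrderedRing K]
    {x y : K} (h : |x| < |y|) : |-x / y| < 1 := by
  rw [abs_div, abs_neg, div_lt_one ((abs_nonneg x).trans_lt h)]
  exact h

open CohnP3 in
/-- For `0 < a < 1`, `|1-2a-8a²+8a³-8a⁴-2a⁵+a⁶| < |2-a-4a²+16a³-4a⁴-a⁵+2a⁶|`, so the
zero of the linear polynomial `p₃` lies in the open unit disk. -/
theorem stmt_13 (a : ℝ) (h0 : 0 < a) (h1 : a < 1) :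
    |1 - 2 * a - 8 * a ^ 2 + 8 * a ^ 3 - 8 * a ^ 4 - 2 * a ^ 5 + a ^ 6| <
      |2 - a - 4 * a ^ 2 + 16 * a ^ 3 - 4 * a ^ 4 - a ^ 5 + 2 * a ^ 6| ∧
    |(-(1 - 2 * a - 8 * a ^ 2 + 8 * a ^ 3 - 8 * a ^ 4 - 2 * a ^ 5 + a ^ 6)) /
        (2 - a - 4 * a ^ 2 + 16 * a ^ 3 - 4 * a ^ 4 - a ^ 5 + 2 * a ^ 6)| < 1 := by
  have h : |const a| < |lead a| := (abs_const_lt_lead h0 h1.ne).trans_le (le_abs_self _)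
  exact ⟨h, abs_neg_div_lt_one_of_abs_lt h⟩
end
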